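/- arXiv:1102.5414 — 3 statements merged into one kernel-verified Lean document; each statement's English description precedes it below -/
import Mathlib

section
/- Let R be a commutative ring and let A, B be two comaximal ideals of R, i.e. A + B = R. Then for n ≥ 3, the mixed commutator subgroup [E(n,R,A), E(n,R,B)] of relative elementary subgroups of GL(n,R) equals E(n,R,AB). -/
open Matrix

/-- The elementary transvection `t_{ij}(c) = 1 + c e_{ij}` as an element of `GL(n,R)`. -/
def transvectionGL (R : Type*) [CommRing R] (N : ℕ) (i j : Fin N) (hij : i ≠ j) (c : R) :
    GL (Fin N) R :=
  ⟨Matrix.transvection i j c, Matrix.transvection i j (-c),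
    by rw [Matrix.transvection_mul_transvection_same i j hij, add_neg_cancel,
      Matrix.transvection_zero],
    by rw [Matrix.transvection_mul_transvection_same i j hij, neg_add_cancel,
      Matrix.transvection_zero]⟩

/-- `E(n,I)`: the subgroup of `GL(n,R)` generated by the elementary transvections
`t_{ij}(c)` with `c ∈ I`, `i ≠ j`. -/
def elementarySubgroup (R : Type*) [CommRing R] (N : ℕ) (I : Ideal R) :
    Subgroup (GL (Fin N) R) :=
  Subgroup.closure
    { g | ∃ (i j : Fin N) (hij : i ≠ j) (c : R), c ∈ I ∧ g = transvectionGL R N i j hij c }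

/-- `E(n,R,I)`: the relative elementary subgroup of level `I`, the normal closure of
`E(n,I)` in the (absolute) elementary group `E(n,R) = E(n, (⊤ : Ideal R))`. -/
def relativeElementarySubgroup (R : Type*) [CommRing R] (N : ℕ) (I : Ideal R) :
    Subgroup (GL (Fin N) R) :=
  Subgroup.closure
    { g | ∃ e ∈ elementarySubgroup R N I, ∃ u ∈ elementarySubgroup R N (⊤ : Ideal R),
        g = u * e * u⁻¹ }

/-- `GL(n,R,I)`: the principal congruence subgroup of level `I`, the kernel of the
reduction homomorphism `GL(n,R) → GL(n,R/I)`. -/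
def congruenceSubgroup (R : Type*) [CommRing R] (N : ℕ) (I : Ideal R) :
    Subgroup (GL (Fin N) R) :=
  (Units.map ((Ideal.Quotient.mk I).mapMatrix.toMonoidHom :
    Matrix (Fin N) (Fin N) R →* Matrix (Fin N) (Fin N) (R ⧸ I))).ker

/-! Write `1 = p + q` with `p ∈ A`, `q ∈ B`. For a third index `h`,
`t_kl(a) = [t_kh(a), t_hl(p)] · t_kl(aq)` with `aq ∈ AB`, so modulo `E(n,R,AB)` a transvection
of level `A` is a commutator of transvections of level `A` at other positions. This disposes of
the only position at which the Chevalley formula gives no information, the opposite one: it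
shows that conjugating `E(n,A)` by `E(n,R)` stays in `E(n,A) · E(n,R,AB)`, so
`E(n,R,A) ≤ E(n,A) · E(n,R,AB)`, and that `[t_ij(a), t_kl(b)] ∈ E(n,R,AB)` for all positions.
Hence `[E(n,R,A), E(n,R,B)] ≤ E(n,R,AB)`; the reverse inclusion comes from
`t_ij(ab) = [t_ih(a), t_hj(b)]`. -/

open scoped commutatorElement

namespace Subgroup

variable {G : Type*} [Group G]

lemma normalizer_inf_normalizer_le_normalizer_commutator (H K : Subgroup G) :
    normalizer H ⊓ normalizer K ≤ normalizer ((⁅H, K⁆ : Subgroup G) : Set G) := by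
  intro g hg
  rw [mem_inf, mem_normalizer_iff_map_conj_eq, mem_normalizer_iff_map_conj_eq] at hg
  rw [mem_normalizer_iff_map_conj_eq, map_commutator, hg.1, hg.2]

def centralizerMod (K : Subgroup G) (y : G) : Subgroup G where
  carrier := {x | x ∈ normalizer K ∧ ⁅x, y⁆ ∈ K}
  one_mem' := ⟨one_mem _, by simp⟩
  mul_mem' := by
    rintro g h ⟨hg, hgy⟩ ⟨hh, hhy⟩
    refine ⟨mul_mem hg hh, ?_⟩
    rw [commutatorElement_mul_left_eq_conj_mul]
    exact mul_mem ((hg _).mp hhy) hgy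
  inv_mem' := by
    rintro g ⟨hg, hgy⟩
    refine ⟨inv_mem hg, ?_⟩
    rw [commutatorElement_inv_left, ← commutatorElement_inv]
    exact (mem_normalizer_iff''.mp hg _).mp (inv_mem hgy)

variable {K : Subgroup G}

lemma le_centralizerMod {y : G} (hy : y ∈ normalizer K) : K ≤ K.centralizerMod y := by
  intro x hx
  refine ⟨le_normalizer hx, ?_⟩
  rw [commutatorElement_def, mul_assoc, mul_assoc, ← mul_assoc y]
  exact mul_mem hx ((hy _).mp (inv_mem hx))

lemma commutator_closure_sup_le {S T : Set G} (hS : S ⊆ normalizer (K : Set G))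
    (hT : T ⊆ normalizer (K : Set G))
    (hST : ∀ s ∈ S, ∀ t ∈ T, ⁅s, t⁆ ∈ K) : ⁅closure S ⊔ K, closure T ⊔ K⁆ ≤ K := by
  have hTK : closure T ⊔ K ≤ normalizer K := sup_le ((closure_le _).mpr hT) le_normalizer
  have hT_le : ∀ s ∈ S, closure T ⊔ K ≤ K.centralizerMod s := fun s hs =>
    sup_le ((closure_le _).mpr fun t ht => ⟨hT ht, by simpa using inv_mem (hST s hs t ht)⟩)
      (le_centralizerMod (hS hs))
  refine commutator_le.mpr fun x hx y hy => ?_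
  have hS_le : closure S ⊔ K ≤ K.centralizerMod y :=
    sup_le ((closure_le _).mpr fun s hs => ⟨hS hs, by
      simpa using inv_mem (hT_le s hs hy).2⟩) (le_centralizerMod (hTK hy))
  exact (hS_le hx).2

end Subgroup

section Transvections

variable {R : Type*} [CommRing R] {n : ℕ}

local notation "𝐭" => transvectionGL _ _

lemma transvectionGL_mul_same {i j : Fin n} (hij : i ≠ j) (c d : R) :
    𝐭 i j hij c * 𝐭 i j hij d = 𝐭 i j hij (c + d) :=
  Units.ext (transvection_mul_transvection_same i j hij c d)

lemma transvectionGL_inv {i j : Fin n} (hij : i ≠ j) (c : R) :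
    (𝐭 i j hij c)⁻¹ = 𝐭 i j hij (-c) :=
  Units.ext rfl

lemma commute_transvectionGL {i j k l : Fin n} (hij : i ≠ j) (hkl : k ≠ l) (hjk : j ≠ k)
    (hli : l ≠ i) (c d : R) : Commute (𝐭 i j hij c) (𝐭 k l hkl d) := by
  refine Units.ext ?_
  change transvection i j c * transvection k l d = transvection k l d * transvection i j c
  simp only [transvection, mul_add, mul_one, add_mul, one_mul, ne_eq, hjk, hli,
    not_false_eq_true, single_mul_single_of_ne, add_zero]
  abel

lemma commutatorElement_transvectionGL {i j l : Fin n} (hij : i ≠ j) (hjl : j ≠ l) (hil : i ≠ l)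
    (c d : R) : ⁅𝐭 i j hij c, 𝐭 j l hjl d⁆ = 𝐭 i l hil (c * d) := by
  refine Units.ext ?_
  change transvection i j c * transvection j l d * transvection i j (-c) * transvection j l (-d)
    = transvection i l (c * d)
  simp only [transvection, mul_add, mul_one, add_mul, one_mul, single_mul_single_same, ne_eq,
    hij.symm, hjl.symm, hil.symm, not_false_eq_true, single_mul_single_of_ne, add_zero, mul_neg,
    neg_mul, neg_neg]
  simp only [← single_neg]
  abel

variable {I J : Ideal R}

lemma transvectionGL_mem_elementarySubgroup {i j : Fin n} (hij : i ≠ j) {c : R} (hc : c ∈ I) :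
    𝐭 i j hij c ∈ elementarySubgroup R n I :=
  Subgroup.subset_closure ⟨i, j, hij, c, hc, rfl⟩

lemma elementarySubgroup_mono (h : I ≤ J) : elementarySubgroup R n I ≤ elementarySubgroup R n J :=
  Subgroup.closure_mono fun _ ⟨i, j, hij, c, hc, hg⟩ => ⟨i, j, hij, c, h hc, hg⟩

lemma elementarySubgroup_le_relativeElementarySubgroup :
    elementarySubgroup R n I ≤ relativeElementarySubgroup R n I := fun g hg =>
  Subgroup.subset_closure ⟨g, hg, 1, one_mem _, by simp⟩

lemma elementarySubgroup_top_le_normalizer_relativeElementarySubgroup :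
    elementarySubgroup R n ⊤ ≤
      Subgroup.normalizer (relativeElementarySubgroup R n I : Set (GL (Fin n) R)) := by
  refine Subgroup.le_normalizer_closure_iff.mpr ?_
  rintro u hu _ ⟨e, he, v, hv, rfl⟩
  exact Subgroup.subset_closure ⟨e, he, u * v, mul_mem hu hv, by group⟩

lemma relativeElementarySubgroup_le_of_le_normalizer {H : Subgroup (GL (Fin n) R)}
    (hI : elementarySubgroup R n I ≤ H)
    (hE : elementarySubgroup R n ⊤ ≤ Subgroup.normalizer (H : Set (GL (Fin n) R))) :
    relativeElementarySubgroup R n I ≤ H :=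
  (Subgroup.closure_le _).mpr fun _ ⟨_, he, _, hu, hg⟩ => hg ▸ (hE hu _).mp (hI he)

lemma elementarySubgroup_top_le_normalizer {H : Subgroup (GL (Fin n) R)}
    (h : ∀ (i j : Fin n) (hij : i ≠ j) (x : R), ∀ g ∈ H, 𝐭 i j hij x * g * (𝐭 i j hij x)⁻¹ ∈ H) :
    elementarySubgroup R n ⊤ ≤ Subgroup.normalizer (H : Set (GL (Fin n) R)) := by
  refine (Subgroup.closure_le _).mpr ?_
  rintro _ ⟨i, j, hij, x, -, rfl⟩
  refine Subgroup.mem_normalizer_iff.mpr fun g => ⟨h i j hij x g, fun hg => ?_⟩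
  simpa [← transvectionGL_inv, mul_assoc] using h i j hij (-x) _ hg

lemma commutatorElement_transvectionGL_mem_of_ne {i j k l : Fin n} (hij : i ≠ j) (hkl : k ≠ l)
    {a b : R} (hab : a * b ∈ J) (h : (i, j) ≠ (l, k)) :
    ⁅𝐭 i j hij a, 𝐭 k l hkl b⁆ ∈ elementarySubgroup R n J := by
  by_cases hjk : j = k
  · subst hjk
    have hil : i ≠ l := fun hil => h (by rw [hil])
    rw [commutatorElement_transvectionGL hij hkl hil]
    exact transvectionGL_mem_elementarySubgroup hil hab
  by_cases hli : l = i
  · subst hli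
    rw [← commutatorElement_inv, commutatorElement_transvectionGL hkl hij (Ne.symm hjk)]
    exact inv_mem (transvectionGL_mem_elementarySubgroup _ (by rwa [mul_comm]))
  rw [(commute_transvectionGL hij hkl hjk hli a b).commutator_eq]
  exact one_mem _

lemma conj_transvectionGL_mem_of_ne {r s i j : Fin n} (hrs : r ≠ s) (hij : i ≠ j) (x : R)
    {a : R} (ha : a ∈ I) (h : (i, j) ≠ (s, r)) :
    𝐭 r s hrs x * 𝐭 i j hij a * (𝐭 r s hrs x)⁻¹ ∈ elementarySubgroup R n I := by
  rw [← MulAut.conj_apply, conj_eq_commutatorElement_mul]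
  refine mul_mem (commutatorElement_transvectionGL_mem_of_ne hrs hij (I.mul_mem_left x ha) ?_)
    (transvectionGL_mem_elementarySubgroup hij ha)
  rintro ⟨⟩
  exact h rfl

variable {A B : Ideal R}

lemma elementarySubgroup_le_of_forall_ne (hn : 3 ≤ n) (hAB : A ⊔ B = ⊤)
    {H : Subgroup (GL (Fin n) R)} (k l : Fin n)
    (hH : ∀ (i j : Fin n) (hij : i ≠ j), (i, j) ≠ (k, l) → ∀ c ∈ A, 𝐭 i j hij c ∈ H)
    (hABH : elementarySubgroup R n (A * B) ≤ H) : elementarySubgroup R n A ≤ H := by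
  obtain ⟨p, hp, q, hq, hpq⟩ := Submodule.mem_sup.mp (hAB ▸ Submodule.mem_top : (1 : R) ∈ A ⊔ B)
  refine (Subgroup.closure_le _).mpr ?_
  rintro _ ⟨i, j, hij, a, ha, rfl⟩
  rcases ne_or_eq (i, j) (k, l) with hkl | hkl
  · exact hH i j hij hkl a ha
  obtain ⟨rfl, rfl⟩ := Prod.ext_iff.mp hkl
  obtain ⟨h, hhi, hhj⟩ := Fin.exists_ne_and_ne_of_two_lt i j (by omega)
  have hsplit : 𝐭 i j hij a = ⁅𝐭 i h hhi.symm a, 𝐭 h j hhj p⁆ * 𝐭 i j hij (a * q) := by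
    rw [commutatorElement_transvectionGL _ _ hij, transvectionGL_mul_same, ← mul_add, hpq, mul_one]
  rw [hsplit]
  refine mul_mem (Subgroup.commutator_le_self H (Subgroup.commutator_mem_commutator ?_ ?_))
    (hABH (transvectionGL_mem_elementarySubgroup hij (Ideal.mul_mem_mul ha hq)))
  · exact hH i h _ (fun e => hhj (Prod.ext_iff.mp e).2) a ha
  · exact hH h j _ (fun e => hhi (Prod.ext_iff.mp e).1) p hp

lemma commutatorElement_transvectionGL_mem_relativeElementarySubgroup (hn : 3 ≤ n)
    (hAB : A ⊔ B = ⊤) {i j k l : Fin n} (hij : i ≠ j) (hkl : k ≠ l) {a b : R} (ha : a ∈ A)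
    (hb : b ∈ B) : ⁅𝐭 i j hij a, 𝐭 k l hkl b⁆ ∈ relativeElementarySubgroup R n (A * B) := by
  have hN := elementarySubgroup_top_le_normalizer_relativeElementarySubgroup (R := R) (n := n)
    (I := A * B)
  have hE : elementarySubgroup R n A ≤
      (relativeElementarySubgroup R n (A * B)).centralizerMod (𝐭 k l hkl b) := by
    refine elementarySubgroup_le_of_forall_ne hn hAB l k (fun i' j' hij' hne c hc => ⟨?_, ?_⟩) ?_
    · exact hN (transvectionGL_mem_elementarySubgroup hij' trivial)
    · exact elementarySubgroup_le_relativeElementarySubgroup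
        (commutatorElement_transvectionGL_mem_of_ne hij' hkl (Ideal.mul_mem_mul hc hb) hne)
    · exact elementarySubgroup_le_relativeElementarySubgroup.trans
        (Subgroup.le_centralizerMod (hN (transvectionGL_mem_elementarySubgroup hkl trivial)))
  exact (hE (transvectionGL_mem_elementarySubgroup hij ha)).2

lemma relativeElementarySubgroup_le_sup (hn : 3 ≤ n) (hAB : A ⊔ B = ⊤) :
    relativeElementarySubgroup R n A ≤
      elementarySubgroup R n A ⊔ relativeElementarySubgroup R n (A * B) := by
  refine relativeElementarySubgroup_le_of_le_normalizer le_sup_left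
    (elementarySubgroup_top_le_normalizer fun r s hrs x g hg => ?_)
  let H := (elementarySubgroup R n A ⊔ relativeElementarySubgroup R n (A * B)).comap
    (MulAut.conj (𝐭 r s hrs x)).toMonoidHom
  have hK : relativeElementarySubgroup R n (A * B) ≤ H := fun y hy =>
    Subgroup.mem_sup_right ((elementarySubgroup_top_le_normalizer_relativeElementarySubgroup
      (transvectionGL_mem_elementarySubgroup hrs trivial) y).mp hy)
  have hA : elementarySubgroup R n A ≤ H :=
    elementarySubgroup_le_of_forall_ne hn hAB s r
      (fun i j hij hne c hc =>
        Subgroup.mem_sup_left (conj_transvectionGL_mem_of_ne hrs hij x hc hne))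
      (elementarySubgroup_le_relativeElementarySubgroup.trans hK)
  exact sup_le hA hK hg

lemma commutator_relativeElementarySubgroup_le (hn : 3 ≤ n) (hAB : A ⊔ B = ⊤) :
    ⁅relativeElementarySubgroup R n A, relativeElementarySubgroup R n B⁆ ≤
      relativeElementarySubgroup R n (A * B) := by
  have hB := relativeElementarySubgroup_le_sup (R := R) hn (sup_comm A B ▸ hAB)
  rw [mul_comm B A] at hB
  have hN : elementarySubgroup R n ⊤ ≤ Subgroup.normalizer
      (relativeElementarySubgroup R n (A * B) : Set (GL (Fin n) R)) :=
    elementarySubgroup_top_le_normalizer_relativeElementarySubgroup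
  refine (Subgroup.commutator_mono (relativeElementarySubgroup_le_sup hn hAB) hB).trans
    (Subgroup.commutator_closure_sup_le
      (fun g hg => hN (elementarySubgroup_mono le_top (Subgroup.subset_closure hg)))
      (fun g hg => hN (elementarySubgroup_mono le_top (Subgroup.subset_closure hg))) ?_)
  rintro _ ⟨i, j, hij, a, ha, rfl⟩ _ ⟨k, l, hkl, b, hb, rfl⟩
  exact commutatorElement_transvectionGL_mem_relativeElementarySubgroup hn hAB hij hkl ha hb

lemma relativeElementarySubgroup_mul_le_commutator (hn : 3 ≤ n) :
    relativeElementarySubgroup R n (A * B) ≤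
      ⁅relativeElementarySubgroup R n A, relativeElementarySubgroup R n B⁆ := by
  refine relativeElementarySubgroup_le_of_le_normalizer ((Subgroup.closure_le _).mpr ?_)
    ((le_inf elementarySubgroup_top_le_normalizer_relativeElementarySubgroup
      elementarySubgroup_top_le_normalizer_relativeElementarySubgroup).trans
      (Subgroup.normalizer_inf_normalizer_le_normalizer_commutator _ _))
  rintro _ ⟨i, j, hij, c, hc, rfl⟩
  obtain ⟨h, hhi, hhj⟩ := Fin.exists_ne_and_ne_of_two_lt i j (by omega)
  induction hc using Submodule.mul_induction_on' with
  | mem_mul_mem a ha b hb =>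
    rw [← commutatorElement_transvectionGL hhi.symm hhj hij]
    exact Subgroup.commutator_mem_commutator
      (elementarySubgroup_le_relativeElementarySubgroup
        (transvectionGL_mem_elementarySubgroup _ ha))
      (elementarySubgroup_le_relativeElementarySubgroup
        (transvectionGL_mem_elementarySubgroup _ hb))
  | add x _ y _ hx hy =>
    rw [← transvectionGL_mul_same]
    exact mul_mem hx hy

end Transvections

/-- Theorem 4A (commutative case): for comaximal ideals `A + B = R` and `n ≥ 3`,
`[E(n,R,A), E(n,R,B)] = E(n,R,AB)`. -/
theorem relative_commutator_of_comaximal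
    (R : Type*) [CommRing R] (N : ℕ) (hN : 3 ≤ N)
    (A B : Ideal R) (hAB : A ⊔ B = ⊤) :
    ⁅relativeElementarySubgroup R N A, relativeElementarySubgroup R N B⁆ =
      relativeElementarySubgroup R N (A * B) :=
  le_antisymm (commutator_relativeElementarySubgroup_le hN hAB)
    (relativeElementarySubgroup_mul_le_commutator hN)
end

section
/- Let R be a commutative local ring and n ≥ 2. Then SL(n,R) = E(n,R), i.e. every matrix of determinant 1 over a local ring is a product of elementary transvections. -/
open Matrix

/-- The elementary transvection `t_{ij}(c) = 1 + c e_{ij}` as an element of `SL(n,R)`. -/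
def transvectionSL (R : Type*) [CommRing R] (N : ℕ) (i j : Fin N) (hij : i ≠ j) (c : R) :
    Matrix.SpecialLinearGroup (Fin N) R :=
  ⟨Matrix.transvection i j c, Matrix.det_transvection_of_ne i j hij c⟩

/-- `E(n,R)`: the elementary subgroup of `SL(n,R)`, generated by all elementary
transvections. -/
def elementarySL (R : Type*) [CommRing R] (N : ℕ) :
    Subgroup (Matrix.SpecialLinearGroup (Fin N) R) :=
  Subgroup.closure
    { g | ∃ (i j : Fin N) (hij : i ≠ j) (c : R), g = transvectionSL R N i j hij c }

/-!
Gaussian elimination. Over a local ring every column of an invertible matrix contains a unit.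
If `A = diag(1ₖ, A')`, the unit in column `k` lies in `A'`, and transvections turn the
pivot `A k k` into `1` (routing it through a second row of `A'` if the unit already sits on the
diagonal). Adding multiples of row `k` clears column `k`; doing the same to the transpose clears
row `k`, so `A` becomes `diag(1ₖ₊₁, A'')`. At the last step `A = diag(1, …, 1, a)` and
`det A = 1` forces `a = 1`.
-/

open scoped MatrixGroups

namespace Matrix

variable {n R : Type*} [DecidableEq n] [CommRing R]

lemma transvection_eq_one_add_vecMulVec (i j : n) (c : R) :
    transvection i j c = 1 + vecMulVec (Pi.single i c) (Pi.single j 1) := by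
  rw [transvection]
  congr 1
  ext a b
  simp only [vecMulVec_apply, single_apply, Pi.single_apply]
  grind

variable [Fintype n]

lemma one_add_vecMulVec_mul_one_add_vecMulVec {u v w : n → R} (hwv : w ⬝ᵥ v = 0) :
    (1 + vecMulVec u w) * (1 + vecMulVec v w) = 1 + vecMulVec (u + v) w := by
  rw [add_mul, mul_add, mul_add, vecMulVec_mul_vecMulVec, hwv]
  simp only [one_mul, mul_one, zero_smul, vecMulVec_zero, add_vecMulVec]
  abel

lemma exists_isUnit_apply_of_isUnit_det [IsLocalRing R] {A : Matrix n n R} (hA : IsUnit A.det)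
    (j : n) : ∃ i, IsUnit (A i j) := by
  obtain ⟨i, -, hi⟩ := IsLocalRing.exists_of_isUnit_sum (det_eq_sum_mul_adjugate_col A j ▸ hA)
  exact ⟨i, isUnit_of_mul_isUnit_left hi⟩

end Matrix

section

variable {R : Type*} [CommRing R] {N : ℕ}

local notation:1024 "↑ₘ" A:1024 => ((A : SL(N, R)) : Matrix (Fin N) (Fin N) R)

lemma transvectionSL_mem_elementarySL (i j : Fin N) (hij : i ≠ j) (c : R) :
    transvectionSL R N i j hij c ∈ elementarySL R N :=
  Subgroup.subset_closure ⟨i, j, hij, c, rfl⟩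

lemma transpose_mem_elementarySL {g : SL(N, R)} (hg : g ∈ elementarySL R N) :
    g.transpose ∈ elementarySL R N := by
  induction hg using Subgroup.closure_induction with
  | mem g hg =>
    obtain ⟨i, j, hij, c, rfl⟩ := hg
    convert transvectionSL_mem_elementarySL j i hij.symm c using 1
    exact Subtype.ext (show (transvection i j c)ᵀ = transvection j i c by
      simp [transvection, transpose_single])
  | one =>
    convert one_mem (elementarySL R N)
    exact Subtype.ext transpose_one
  | mul x y _ _ hx hy =>
    convert mul_mem hy hx using 1
    exact Subtype.ext (transpose_mul _ _)
  | inv x _ hx =>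
    convert inv_mem hx using 1
    exact Subtype.ext (adjugate_transpose _)

lemma exists_mem_elementarySL_coe_eq_one_add_vecMulVec (k : Fin N) {c : Fin N → R}
    (hc : c k = 0) :
    ∃ g ∈ elementarySL R N, ↑ₘg = 1 + vecMulVec c (Pi.single k 1) := by
  let p (v : Fin N → R) : Prop :=
    v k = 0 ∧ ∃ g ∈ elementarySL R N, ↑ₘg = 1 + vecMulVec v (Pi.single k 1)
  have hp0 : p 0 := ⟨rfl, 1, one_mem _, by simp⟩
  suffices p c from this.2
  rw [← Finset.univ_sum_single c]
  refine Finset.sum_induction _ p ?_ hp0 fun i _ => ?_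
  · rintro u v ⟨hu, g, hg, hgu⟩ ⟨hv, h, hh, hhv⟩
    refine ⟨by simp [hu, hv], g * h, mul_mem hg hh, ?_⟩
    change ↑ₘg * ↑ₘh = _
    rw [hgu, hhv,
      one_add_vecMulVec_mul_one_add_vecMulVec (by rw [single_dotProduct, hv, mul_zero])]
  · by_cases hik : i = k
    · rwa [hik, hc, Pi.single_zero]
    · exact ⟨Pi.single_eq_of_ne (Ne.symm hik) _, _,
        transvectionSL_mem_elementarySL i k hik (c i),
        transvection_eq_one_add_vecMulVec i k (c i)⟩

lemma exists_mem_elementarySL_mul_apply_eq (k : Fin N) (A : SL(N, R)) :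
    ∃ g ∈ elementarySL R N,
      ∀ i j, (g * A) i j = if i = k then A k j else A i j - A i k * A k j := by
  obtain ⟨g, hg, hgv⟩ := exists_mem_elementarySL_coe_eq_one_add_vecMulVec k
    (c := fun i => if i = k then 0 else -A i k) (if_pos rfl)
  refine ⟨g, hg, fun i j => ?_⟩
  change (↑ₘg * ↑ₘA) i j = _
  rw [hgv, add_mul, one_mul, vecMulVec_mul, single_vecMul, one_smul]
  split_ifs with hik <;> simp [hik, vecMulVec_apply, sub_eq_add_neg]

/-- `A` is block diagonal `diag(1ₖ, A')`. -/
def IsOneOnFirst (k : ℕ) (A : Matrix (Fin N) (Fin N) R) : Prop :=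
  ∀ i j : Fin N, ((i : ℕ) < k ∨ (j : ℕ) < k) → A i j = (1 : Matrix (Fin N) (Fin N) R) i j

namespace IsOneOnFirst

section Matrix

variable {k : ℕ} {A : Matrix (Fin N) (Fin N) R}

lemma transpose (hA : IsOneOnFirst k A) : IsOneOnFirst k Aᵀ := fun i j hij => by
  simp [hA j i hij.symm, one_apply, eq_comm]

lemma succ {k : Fin N} (hA : IsOneOnFirst k A) (hrow : ∀ j, A k j = (1 : Matrix _ _ R) k j)
    (hcol : ∀ i, A i k = (1 : Matrix _ _ R) i k) : IsOneOnFirst (k + 1) A := by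
  intro i j hij
  by_cases hik : i = k
  · exact hik ▸ hrow j
  by_cases hjk : j = k
  · exact hjk ▸ hcol i
  exact hA i j (by omega)

lemma transvection_mul {a b : Fin N} (hA : IsOneOnFirst k A) (ha : k ≤ a) (hb : k ≤ b) (c : R) :
    IsOneOnFirst k (transvection a b c * A) := by
  intro i j hij
  by_cases hia : i = a
  · subst hia
    have hj : (j : ℕ) < k := hij.resolve_left (by omega)
    rw [transvection_mul_apply_same, hA i j (.inr hj), hA b j (.inr hj),
      one_apply_ne (Fin.ne_of_val_ne (by omega)), one_apply_ne (Fin.ne_of_val_ne (by omega)),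
      mul_zero, add_zero]
  · rw [transvection_mul_apply_of_ne _ _ _ _ hia]
    exact hA i j hij

lemma eq_one_of_det_eq_one (hA : IsOneOnFirst k A) (hk : N ≤ k + 1) (hdet : A.det = 1) :
    A = 1 := by
  have hoff : ∀ i j, i ≠ j → A i j = 0 := fun i j hij => by
    have := Fin.val_ne_of_ne hij
    rw [hA i j (by omega), one_apply_ne hij]
  have hdiagonal : A = diagonal fun i => A i i := by
    ext i j
    by_cases hij : i = j
    · rw [hij, diagonal_apply_eq]
    · rw [hoff i j hij, diagonal_apply_ne _ hij]
  have hdiag : ∀ i, A i i = 1 := fun i => by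
    by_cases hi : (i : ℕ) < k
    · rw [hA i i (.inl hi), one_apply_eq]
    rwa [hdiagonal, det_diagonal, Finset.prod_eq_single i (fun j _ hji => ?_) (by simp)] at hdet
    have := Fin.val_ne_of_ne hji
    rw [hA j j (.inl (by omega)), one_apply_eq]
  rw [hdiagonal, funext hdiag, diagonal_one]

end Matrix

lemma exists_mem_elementarySL_clear_column {k : Fin N} {A : SL(N, R)}
    (hA : IsOneOnFirst k ↑ₘA) (hkk : A k k = 1) :
    ∃ g ∈ elementarySL R N, IsOneOnFirst k ↑ₘ(g * A) ∧
      (∀ i, (g * A) i k = (1 : Matrix (Fin N) (Fin N) R) i k) ∧ ∀ j, (g * A) k j = A k j := by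
  obtain ⟨g, hg, hgA⟩ := exists_mem_elementarySL_mul_apply_eq k A
  refine ⟨g, hg, fun i j hij => ?_, fun i => ?_, fun j => by simp [hgA]⟩
  · rw [hgA]
    split_ifs with hik
    · subst hik
      exact hA i j hij
    have hik0 : A i k * A k j = 0 := by
      rcases hij with hi | hj
      · rw [hA i k (.inl hi), one_apply_ne hik, zero_mul]
      · rw [hA k j (.inr hj), one_apply_ne (Fin.ne_of_val_ne (by omega)), mul_zero]
    rw [hik0, sub_zero]
    exact hA i j hij
  · rw [hgA]
    split_ifs with hik
    · rw [hik, hkk, one_apply_eq]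
    · rw [hkk, mul_one, sub_self, one_apply_ne hik]

lemma exists_mem_elementarySL_apply_eq_one {k : ℕ} {A : SL(N, R)} (hA : IsOneOnFirst k ↑ₘA)
    {a b j : Fin N} (hab : a ≠ b) (ha : k ≤ a) (hb : k ≤ b) (hu : IsUnit (A b j)) :
    ∃ g ∈ elementarySL R N, IsOneOnFirst k ↑ₘ(g * A) ∧ (g * A) a j = 1 := by
  refine ⟨transvectionSL R N a b hab ((1 - A a j) * ↑hu.unit⁻¹),
    transvectionSL_mem_elementarySL a b hab _, hA.transvection_mul ha hb _, ?_⟩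
  change (transvection a b ((1 - A a j) * ↑hu.unit⁻¹) * ↑ₘA) a j = 1
  rw [transvection_mul_apply_same, mul_assoc, IsUnit.val_inv_mul]
  ring

variable [IsLocalRing R]

lemma exists_mem_elementarySL_apply_self_eq_one {k : Fin N} (hk : (k : ℕ) + 1 < N)
    {A : SL(N, R)} (hA : IsOneOnFirst k ↑ₘA) :
    ∃ g ∈ elementarySL R N, IsOneOnFirst k ↑ₘ(g * A) ∧ (g * A) k k = 1 := by
  obtain ⟨b, hb⟩ := exists_isUnit_apply_of_isUnit_det (A := ↑ₘA) (by simp) k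
  have hkb : (k : ℕ) ≤ b := by
    by_contra! hbk
    rw [hA b k (.inl hbk), one_apply_ne (Fin.ne_of_val_ne hbk.ne)] at hb
    exact not_isUnit_zero hb
  by_cases hbk : b = k
  · subst hbk
    let l : Fin N := ⟨b + 1, hk⟩
    have hlb : l ≠ b := Fin.ne_of_val_ne (by simp [l])
    obtain ⟨g₁, hg₁, hB, hBl⟩ :=
      hA.exists_mem_elementarySL_apply_eq_one hlb (by simp [l]) le_rfl hb
    obtain ⟨g₂, hg₂, hC, hCb⟩ :=
      hB.exists_mem_elementarySL_apply_eq_one hlb.symm le_rfl (by simp [l]) (hBl ▸ isUnit_one)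
    exact ⟨g₂ * g₁, mul_mem hg₂ hg₁, by rwa [mul_assoc], by rwa [mul_assoc]⟩
  · exact hA.exists_mem_elementarySL_apply_eq_one (Ne.symm hbk) le_rfl hkb hb

lemma exists_mem_elementarySL_isOneOnFirst_succ {k : Fin N} (hk : (k : ℕ) + 1 < N)
    {A : SL(N, R)} (hA : IsOneOnFirst k ↑ₘA) :
    ∃ g ∈ elementarySL R N, ∃ h ∈ elementarySL R N,
      IsOneOnFirst (k + 1) ↑ₘ(g * A * h) := by
  obtain ⟨g₁, hg₁, hB, hBkk⟩ := hA.exists_mem_elementarySL_apply_self_eq_one hk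
  obtain ⟨g₂, hg₂, hC, hCcol, -⟩ := hB.exists_mem_elementarySL_clear_column hBkk
  set C := g₂ * (g₁ * A)
  obtain ⟨g₃, hg₃, hD, hDcol, hDrow⟩ :=
    hC.transpose.exists_mem_elementarySL_clear_column (A := C.transpose)
      (by simpa using hCcol k)
  refine ⟨g₂ * g₁, mul_mem hg₂ hg₁, g₃.transpose, transpose_mem_elementarySL hg₃,
    ?_⟩
  have hgAh : g₂ * g₁ * A * g₃.transpose = (g₃ * C.transpose).transpose :=
    Subtype.ext (by simp [C, mul_assoc])
  rw [hgAh]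
  refine (hD.succ (fun j => ?_) hDcol).transpose
  rw [hDrow]
  simpa [one_apply, eq_comm] using hCcol j

lemma mem_elementarySL {k : ℕ} {A : SL(N, R)} (hA : IsOneOnFirst k ↑ₘA) :
    A ∈ elementarySL R N := by
  by_cases hk : N ≤ k + 1
  · rw [show A = 1 from Subtype.ext (hA.eq_one_of_det_eq_one hk A.det_coe)]
    exact one_mem _
  obtain ⟨g, hg, h, hh, hgAh⟩ :=
    exists_mem_elementarySL_isOneOnFirst_succ (k := ⟨k, by omega⟩) (by simp; omega) hA
  simpa [mul_assoc] using mul_mem (mul_mem (inv_mem hg) hgAh.mem_elementarySL) (inv_mem hh)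
termination_by N - k

end IsOneOnFirst

end

theorem specialLinearGroup_eq_elementary_of_localRing_general
    (R : Type*) [CommRing R] [IsLocalRing R] (N : ℕ) :
    elementarySL R N = ⊤ :=
  eq_top_iff.2 fun A _ => IsOneOnFirst.mem_elementarySL (k := 0) fun _ _ h => by omega

/-- Over a commutative local ring, `SL(n,R) = E(n,R)`: every matrix of determinant one
is a product of elementary transvections. -/
theorem specialLinearGroup_eq_elementary_of_localRing
    (R : Type*) [CommRing R] [IsLocalRing R] (N : ℕ) (hN : 2 ≤ N) :
    elementarySL R N = ⊤ :=
  specialLinearGroup_eq_elementary_of_localRing_general R N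
end

section
/- Let R be a commutative ring, s ∈ R, and let π_n : R → R/s^n R be the reduction maps. If an element a ∈ R satisfies: a maps to 0 in R_s (i.e. s^m a = 0 for some m) and a ∈ s^n R for all n, and R is Noetherian, then by Krull's intersection theorem adapted to this setting, for n large enough with Ann(s^n) = Ann(s^{n+1}) = …, one has a = 0 whenever a ∈ s^n R and F_s(a) = 0. -/
/-!
In a Noetherian ring the ascending chain `Ann(s) ⊆ Ann(s²) ⊆ …` stabilises, say from `k` on.
If `n ≥ k` and `s ^ n * b` dies in `R_s`, then `s ^ (m + n) * b = 0` for some `m`, so `b` lies in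
`Ann(s ^ (m + n)) = Ann(s ^ n)`, i.e. `s ^ n * b = 0`.
-/

section

variable {R : Type*} [CommRing R]

theorem exists_pow_mul_eq_zero_stabilizes [IsNoetherianRing R] (s : R) :
    ∃ k : ℕ, ∀ n, k ≤ n → ∀ a : R, s ^ n * a = 0 → s ^ k * a = 0 := by
  obtain ⟨k, hk⟩ := monotone_stabilizes_iff_noetherian.mpr inferInstance
    (LinearMap.mulLeft R s).iterateKer
  refine ⟨k, fun n hn a ha => ?_⟩
  have hker := hk n hn
  simp only [LinearMap.iterateKer_coe, LinearMap.pow_mulLeft] at hker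
  have ha' : a ∈ LinearMap.ker (LinearMap.mulLeft R (s ^ n)) := ha
  rw [← hker] at ha'
  exact ha'

theorem pow_mul_eq_zero_of_algebraMap_eq_zero {S : Type*} [CommRing S] [Algebra R S]
    {s : R} [IsLocalization.Away s S] {n : ℕ}
    (hn : ∀ m, ∀ a : R, s ^ (m + n) * a = 0 → s ^ n * a = 0) {b : R}
    (hb : algebraMap R S (s ^ n * b) = 0) : s ^ n * b = 0 := by
  obtain ⟨⟨_, m, rfl⟩, hm⟩ := (IsLocalization.map_eq_zero_iff (Submonoid.powers s) S _).mp hb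
  exact hn m b (by rwa [pow_add, mul_assoc])

end

/-- Once `n` exceeds the stabilisation index of the chain of annihilators `Ann(s^i)`
in a Noetherian ring, every element of `s^n R` killed by `F_s : R → R_s` is zero. -/
theorem eq_zero_of_mem_pow_of_localization_eq_zero
    (R : Type*) [CommRing R] [IsNoetherianRing R] (s : R) :
    ∃ k : ℕ,
      (∀ i : ℕ, {a : R | s ^ k * a = 0} = {a : R | s ^ (k + i) * a = 0}) ∧
      ∀ n : ℕ, k ≤ n → ∀ a : R, a ∈ Ideal.span {s ^ n} →
        algebraMap R (Localization.Away s) a = 0 → a = 0 := by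
  obtain ⟨k, hk⟩ := exists_pow_mul_eq_zero_stabilizes s
  refine ⟨k, fun i => Set.ext fun a =>
    ⟨pow_mul_eq_zero_of_le (Nat.le_add_right k i), hk _ (Nat.le_add_right k i) a⟩, ?_⟩
  rintro n hkn _ ha hloc
  obtain ⟨b, rfl⟩ := Ideal.mem_span_singleton.mp ha
  have hn : ∀ m, ∀ a : R, s ^ (m + n) * a = 0 → s ^ n * a = 0 := fun m a h =>
    pow_mul_eq_zero_of_le hkn (hk _ (hkn.trans (Nat.le_add_left n m)) a h)
  exact pow_mul_eq_zero_of_algebraMap_eq_zero hn hloc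
end
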